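/- arXiv:2311.02409 — 3 statements merged into one kernel-verified Lean document; each statement's English description precedes it below -/
import Mathlib

section
/- Define z : ℝ → ℝ by z(t) = 1 / Real.cosh t + Real.log (Real.tanh (t/2)). Then for every t > 0: Real.cosh t * z''(t) + (2 * Real.sinh t + (Real.cosh t)^2 / Real.sinh t) * z'(t) = 0, where z' = deriv z and z'' = deriv (deriv z). -/
private lemma first_deriv_aux (t : ℝ) (ht : 0 < t) :
    HasDerivAt (fun s => 1 / Real.cosh s + Real.log (Real.tanh (s / 2)))
      (1 / Real.sinh t - Real.sinh t / Real.cosh t ^ 2) t := by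
  have hch := Real.cosh_pos t
  have hch2 := Real.cosh_pos (t / 2)
  have hsh := Real.sinh_pos_iff.2 ht
  have hsh2 := Real.sinh_pos_iff.2 (by linarith : (0:ℝ) < t / 2)
  have h1 : HasDerivAt (fun s => 1 / Real.cosh s)
      (-(Real.sinh t) / Real.cosh t ^ 2) t := by
    simpa [one_div, neg_div] using (Real.hasDerivAt_cosh t).fun_inv hch.ne'
  have hhalf : HasDerivAt (fun s : ℝ => s / 2) (1 / 2) t := by
    simpa using (hasDerivAt_id t).div_const 2
  have hs : HasDerivAt (fun s => Real.sinh (s / 2)) (Real.cosh (t / 2) * (1 / 2)) t :=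
    ((Real.hasDerivAt_sinh (t / 2)).comp t hhalf :)
  have hc : HasDerivAt (fun s => Real.cosh (s / 2)) (Real.sinh (t / 2) * (1 / 2)) t :=
    ((Real.hasDerivAt_cosh (t / 2)).comp t hhalf :)
  have hdiv : HasDerivAt (fun s => Real.sinh (s / 2) / Real.cosh (s / 2))
      ((Real.cosh (t / 2) * (1 / 2) * Real.cosh (t / 2)
        - Real.sinh (t / 2) * (Real.sinh (t / 2) * (1 / 2))) / Real.cosh (t / 2) ^ 2) t :=
    hs.div hc hch2.ne'
  have htanh_pos : 0 < Real.sinh (t / 2) / Real.cosh (t / 2) := div_pos hsh2 hch2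
  have h2' := hdiv.log htanh_pos.ne'
  have h2 : HasDerivAt (fun s => Real.log (Real.tanh (s / 2))) (1 / Real.sinh t) t := by
    have hst : Real.sinh t = 2 * Real.sinh (t / 2) * Real.cosh (t / 2) := by
      rw [← Real.sinh_two_mul]; ring_nf
    have heq : (fun s => Real.log (Real.sinh (s / 2) / Real.cosh (s / 2)))
        = fun s => Real.log (Real.tanh (s / 2)) := by
      funext s; rw [Real.tanh_eq_sinh_div_cosh]
    rw [heq] at h2'
    convert h2' using 1
    rw [hst]
    field_simp
    linear_combination (-1) * Real.cosh_sq_sub_sinh_sq (t / 2)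
  have := h1.fun_add h2
  refine this.congr_deriv ?_
  ring
theorem explicit_second_solution_k2_hyperbolic :
    ∀ t : ℝ, 0 < t →
      Real.cosh t
          * deriv (deriv (fun s => 1 / Real.cosh s
              + Real.log (Real.tanh (s / 2)))) t
        + (2 * Real.sinh t + (Real.cosh t) ^ 2 / Real.sinh t)
            * deriv (fun s => 1 / Real.cosh s
                + Real.log (Real.tanh (s / 2))) t = 0 := by
  intro t ht
  have hch := Real.cosh_pos t
  have hsh := Real.sinh_pos_iff.2 ht
  have hd1 : deriv (fun s => 1 / Real.cosh s + Real.log (Real.tanh (s / 2))) t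
      = 1 / Real.sinh t - Real.sinh t / Real.cosh t ^ 2 := (first_deriv_aux t ht).deriv
  -- second derivative of g s = 1/sinh s - sinh s / cosh s ^ 2
  have hg : ∀ u : ℝ, 0 < u → HasDerivAt
      (fun s => 1 / Real.sinh s - Real.sinh s / Real.cosh s ^ 2)
      (-(Real.cosh u) / Real.sinh u ^ 2
        - (Real.cosh u * Real.cosh u ^ 2
            - Real.sinh u * (2 * Real.cosh u * Real.sinh u)) / (Real.cosh u ^ 2) ^ 2) u := by
    intro u hu
    have hchu := Real.cosh_pos u
    have hshu := Real.sinh_pos_iff.2 hu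
    have ha : HasDerivAt (fun s => 1 / Real.sinh s) (-(Real.cosh u) / Real.sinh u ^ 2) u := by
      simpa [one_div, neg_div] using (Real.hasDerivAt_sinh u).fun_inv hshu.ne'
    have hcsq : HasDerivAt (fun s => Real.cosh s ^ 2) (2 * Real.cosh u * Real.sinh u) u := by
      have := (Real.hasDerivAt_cosh u).fun_pow 2
      exact this.congr_deriv (by ring)
    have hb := (Real.hasDerivAt_sinh u).div hcsq (by positivity)
    exact ha.sub hb
  have hEq : deriv (fun s => 1 / Real.cosh s + Real.log (Real.tanh (s / 2)))
      =ᶠ[nhds t] (fun s => 1 / Real.sinh s - Real.sinh s / Real.cosh s ^ 2) := by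
    filter_upwards [Ioi_mem_nhds ht] with s hs
    exact (first_deriv_aux s hs).deriv
  have hd2 : deriv (deriv (fun s => 1 / Real.cosh s + Real.log (Real.tanh (s / 2)))) t
      = -(Real.cosh t) / Real.sinh t ^ 2
        - (Real.cosh t * Real.cosh t ^ 2
            - Real.sinh t * (2 * Real.cosh t * Real.sinh t)) / (Real.cosh t ^ 2) ^ 2 := by
    rw [hEq.deriv_eq]; exact (hg t ht).deriv
  rw [hd1, hd2]
  have hid : Real.cosh t ^ 2 = Real.sinh t ^ 2 + 1 := Real.cosh_sq t
  field_simp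
  nlinarith [hid, sq_nonneg (Real.sinh t), sq_nonneg (Real.cosh t)]
end

section
/- Let a be a real number with a > 1/2 and define y : ℝ → ℝ by y(s) = Real.sqrt (a * Real.cosh (2*s) - 1/2). Then for every real s: (a * Real.cosh (2*s) - 1/2) * y''(s) + a * Real.sinh (2*s) * y'(s) - 2 * a * Real.cosh (2*s) * y(s) = 0, where y' = deriv y and y'' = deriv (deriv y). -/
theorem catenoid_first_fourier_mode_solution (a : ℝ) (ha : a > 1 / 2) :
    ∀ s : ℝ,
      (a * Real.cosh (2 * s) - 1 / 2)
          * deriv (deriv (fun u => Real.sqrt (a * Real.cosh (2 * u) - 1 / 2))) s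
        + a * Real.sinh (2 * s)
            * deriv (fun u => Real.sqrt (a * Real.cosh (2 * u) - 1 / 2)) s
        - 2 * a * Real.cosh (2 * s)
            * Real.sqrt (a * Real.cosh (2 * s) - 1 / 2) = 0 := by
  intro s
  have hfpos : ∀ u : ℝ, 0 < a * Real.cosh (2 * u) - 1 / 2 := by
    intro u
    nlinarith [Real.one_le_cosh (2 * u)]
  have hd1 : ∀ u : ℝ, HasDerivAt (fun u => a * Real.cosh (2 * u) - 1 / 2)
      (2 * a * Real.sinh (2 * u)) u := by
    intro u
    have h := (((hasDerivAt_id u).const_mul 2).cosh.const_mul a).sub_const (1 / 2)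
    refine h.congr_deriv ?_
    simp only [id_eq]
    ring
  have hy : ∀ u : ℝ, HasDerivAt (fun u => Real.sqrt (a * Real.cosh (2 * u) - 1 / 2))
      (a * Real.sinh (2 * u) / Real.sqrt (a * Real.cosh (2 * u) - 1 / 2)) u := by
    intro u
    have h := (hd1 u).sqrt (ne_of_gt (hfpos u))
    convert h using 1
    have hs : Real.sqrt (a * Real.cosh (2 * u) - 1 / 2) ≠ 0 :=
      ne_of_gt (Real.sqrt_pos.mpr (hfpos u))
    field_simp
  have hderiv1 : deriv (fun u => Real.sqrt (a * Real.cosh (2 * u) - 1 / 2))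
      = fun u => a * Real.sinh (2 * u) / Real.sqrt (a * Real.cosh (2 * u) - 1 / 2) :=
    funext fun u => (hy u).deriv
  have hsq : 0 < Real.sqrt (a * Real.cosh (2 * s) - 1 / 2) := Real.sqrt_pos.mpr (hfpos s)
  have hnum : HasDerivAt (fun u => a * Real.sinh (2 * u)) (2 * a * Real.cosh (2 * s)) s := by
    have h := (((hasDerivAt_id s).const_mul 2).sinh).const_mul a
    refine h.congr_deriv ?_
    simp only [id_eq]
    ring
  have hd2 : HasDerivAt
      (fun u => a * Real.sinh (2 * u) / Real.sqrt (a * Real.cosh (2 * u) - 1 / 2))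
      ((2 * a * Real.cosh (2 * s) * Real.sqrt (a * Real.cosh (2 * s) - 1 / 2)
          - a * Real.sinh (2 * s)
            * (a * Real.sinh (2 * s) / Real.sqrt (a * Real.cosh (2 * s) - 1 / 2)))
        / Real.sqrt (a * Real.cosh (2 * s) - 1 / 2) ^ 2) s :=
    hnum.div (hy s) (ne_of_gt hsq)
  rw [hderiv1, hd2.deriv]
  have hr2 : Real.sqrt (a * Real.cosh (2 * s) - 1 / 2) ^ 2 = a * Real.cosh (2 * s) - 1 / 2 :=
    Real.sq_sqrt (hfpos s).le
  rw [hr2]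
  have h1 : Real.sqrt (a * Real.cosh (2 * s) - 1 / 2) ≠ 0 := ne_of_gt hsq
  have h2 : a * Real.cosh (2 * s) - 1 / 2 ≠ 0 := ne_of_gt (hfpos s)
  rw [mul_comm (a * Real.cosh (2 * s) - 1 / 2), div_mul_cancel₀ _ h2]
  ring
end

section
/- Let a be a real number with a > 1/2. Define h : ℝ → ℝ by h(s) = ∫ t in (0:ℝ)..s, (a * Real.cosh (2*t) - 1/2) ^ (-(3:ℝ)/2) (real power), and y₂ : ℝ → ℝ by y₂(s) = Real.sqrt (a * Real.cosh (2*s) - 1/2) * h(s). Then for every real s: (a * Real.cosh (2*s) - 1/2) * y₂''(s) + a * Real.sinh (2*s) * y₂'(s) - 2 * a * Real.cosh (2*s) * y₂(s) = 0, where primes denote iterated `deriv`. -/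
set_option maxHeartbeats 1000000 in
theorem catenoid_second_solution (a : ℝ) (ha : a > 1 / 2) :
    ∀ s : ℝ,
      (a * Real.cosh (2 * s) - 1 / 2)
          * deriv (deriv (fun u => Real.sqrt (a * Real.cosh (2 * u) - 1 / 2)
              * ∫ t in (0 : ℝ)..u,
                  (a * Real.cosh (2 * t) - 1 / 2) ^ (-(3 : ℝ) / 2))) s
        + a * Real.sinh (2 * s)
            * deriv (fun u => Real.sqrt (a * Real.cosh (2 * u) - 1 / 2)
                * ∫ t in (0 : ℝ)..u,
                    (a * Real.cosh (2 * t) - 1 / 2) ^ (-(3 : ℝ) / 2)) s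
        - 2 * a * Real.cosh (2 * s)
            * (Real.sqrt (a * Real.cosh (2 * s) - 1 / 2)
                * ∫ t in (0 : ℝ)..s,
                    (a * Real.cosh (2 * t) - 1 / 2) ^ (-(3 : ℝ) / 2)) = 0 := by
  intro s
  have hfpos : ∀ u : ℝ, 0 < a * Real.cosh (2 * u) - 1 / 2 := by
    intro u; nlinarith [Real.one_le_cosh (2 * u)]
  have hgcont : Continuous (fun t : ℝ => (a * Real.cosh (2 * t) - 1 / 2) ^ (-(3 : ℝ) / 2)) := by
    apply Continuous.rpow_const
    · continuity
    · intro x; exact Or.inl (ne_of_gt (hfpos x))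
  have hlin : ∀ u : ℝ, HasDerivAt (fun v : ℝ => 2 * v) 2 u := by
    intro u; simpa using (hasDerivAt_id u).const_mul 2
  have hf : ∀ u : ℝ, HasDerivAt (fun v => a * Real.cosh (2 * v) - 1 / 2)
      (2 * a * Real.sinh (2 * u)) u := by
    intro u
    have h2 := (Real.hasDerivAt_cosh (2 * u)).comp u (hlin u)
    have h3 := (h2.const_mul a).sub_const (1 / 2)
    exact h3.congr_deriv (by ring)
  have hh : ∀ u : ℝ, HasDerivAt
      (fun v => ∫ t in (0:ℝ)..v, (a * Real.cosh (2 * t) - 1 / 2) ^ (-(3 : ℝ) / 2))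
      ((a * Real.cosh (2 * u) - 1 / 2) ^ (-(3 : ℝ) / 2)) u := by
    intro u
    exact intervalIntegral.integral_hasDerivAt_right
      (hgcont.intervalIntegrable _ _)
      (hgcont.stronglyMeasurableAtFilter _ _)
      hgcont.continuousAt
  have hsq : ∀ u : ℝ, HasDerivAt (fun v => Real.sqrt (a * Real.cosh (2 * v) - 1 / 2))
      (2 * a * Real.sinh (2 * u) / (2 * Real.sqrt (a * Real.cosh (2 * u) - 1 / 2))) u :=
    fun u => (hf u).sqrt (ne_of_gt (hfpos u))
  have hy : ∀ u : ℝ, HasDerivAt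
      (fun v => Real.sqrt (a * Real.cosh (2 * v) - 1 / 2)
        * ∫ t in (0:ℝ)..v, (a * Real.cosh (2 * t) - 1 / 2) ^ (-(3 : ℝ) / 2))
      (2 * a * Real.sinh (2 * u) / (2 * Real.sqrt (a * Real.cosh (2 * u) - 1 / 2))
          * (∫ t in (0:ℝ)..u, (a * Real.cosh (2 * t) - 1 / 2) ^ (-(3 : ℝ) / 2))
        + Real.sqrt (a * Real.cosh (2 * u) - 1 / 2)
          * (a * Real.cosh (2 * u) - 1 / 2) ^ (-(3 : ℝ) / 2)) u :=
    fun u => (hsq u).mul (hh u)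
  have hD1 : deriv (fun v => Real.sqrt (a * Real.cosh (2 * v) - 1 / 2)
        * ∫ t in (0:ℝ)..v, (a * Real.cosh (2 * t) - 1 / 2) ^ (-(3 : ℝ) / 2))
      = fun u => 2 * a * Real.sinh (2 * u) / (2 * Real.sqrt (a * Real.cosh (2 * u) - 1 / 2))
          * (∫ t in (0:ℝ)..u, (a * Real.cosh (2 * t) - 1 / 2) ^ (-(3 : ℝ) / 2))
        + Real.sqrt (a * Real.cosh (2 * u) - 1 / 2)
          * (a * Real.cosh (2 * u) - 1 / 2) ^ (-(3 : ℝ) / 2) :=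
    funext fun u => (hy u).deriv
  have hnum : HasDerivAt (fun u : ℝ => 2 * a * Real.sinh (2 * u))
      (2 * a * (Real.cosh (2 * s) * 2)) s := by
    have := ((Real.hasDerivAt_sinh (2 * s)).comp s (hlin s)).const_mul (2 * a)
    exact this.congr_deriv (by ring)
  have hden : HasDerivAt (fun u : ℝ => 2 * Real.sqrt (a * Real.cosh (2 * u) - 1 / 2))
      (2 * (2 * a * Real.sinh (2 * s) / (2 * Real.sqrt (a * Real.cosh (2 * s) - 1 / 2)))) s :=
    (hsq s).const_mul 2
  have hApos : 0 < Real.sqrt (a * Real.cosh (2 * s) - 1 / 2) :=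
    Real.sqrt_pos.mpr (hfpos s)
  have hq : HasDerivAt (fun u : ℝ => 2 * a * Real.sinh (2 * u)
      / (2 * Real.sqrt (a * Real.cosh (2 * u) - 1 / 2)))
      ((2 * a * (Real.cosh (2 * s) * 2) * (2 * Real.sqrt (a * Real.cosh (2 * s) - 1 / 2))
          - 2 * a * Real.sinh (2 * s)
            * (2 * (2 * a * Real.sinh (2 * s) / (2 * Real.sqrt (a * Real.cosh (2 * s) - 1 / 2)))))
        / (2 * Real.sqrt (a * Real.cosh (2 * s) - 1 / 2)) ^ 2) s :=
    hnum.div hden (by positivity)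
  have hrp : HasDerivAt (fun u : ℝ => (a * Real.cosh (2 * u) - 1 / 2) ^ (-(3:ℝ)/2))
      (2 * a * Real.sinh (2 * s) * (-(3:ℝ)/2)
        * (a * Real.cosh (2 * s) - 1 / 2) ^ (-(3:ℝ)/2 - 1)) s :=
    (hf s).rpow_const (Or.inl (ne_of_gt (hfpos s)))
  have hD := (hq.mul (hh s)).add ((hsq s).mul hrp)
  have hd2 := hD.deriv
  simp only [Pi.add_def, Pi.mul_def] at hd2
  rw [hD1, hd2]
  beta_reduce
  -- now pure algebra
  have hA2 : Real.sqrt (a * Real.cosh (2 * s) - 1 / 2) ^ 2 = a * Real.cosh (2 * s) - 1 / 2 :=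
    Real.sq_sqrt (hfpos s).le
  have hg32 : (a * Real.cosh (2 * s) - 1 / 2) ^ (-(3:ℝ)/2)
      = ((a * Real.cosh (2 * s) - 1 / 2) * Real.sqrt (a * Real.cosh (2 * s) - 1 / 2))⁻¹ := by
    rw [show (-(3:ℝ)/2) = -(3/2) by norm_num, Real.rpow_neg (hfpos s).le,
      show (3:ℝ)/2 = 1 + 1/2 by norm_num, Real.rpow_add (hfpos s), Real.rpow_one,
      ← Real.sqrt_eq_rpow]
  have hg52 : (a * Real.cosh (2 * s) - 1 / 2) ^ (-(3:ℝ)/2 - 1)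
      = ((a * Real.cosh (2 * s) - 1 / 2) ^ 2 * Real.sqrt (a * Real.cosh (2 * s) - 1 / 2))⁻¹ := by
    rw [show (-(3:ℝ)/2 - 1) = -(2 + 1/2) by norm_num, Real.rpow_neg (hfpos s).le,
      Real.rpow_add (hfpos s), ← Real.sqrt_eq_rpow, show (2:ℝ) = ((2:ℕ):ℝ) by norm_num,
      Real.rpow_natCast]
  rw [hg32, hg52]
  set A := Real.sqrt (a * Real.cosh (2 * s) - 1 / 2) with hA
  set H := ∫ t in (0:ℝ)..s, (a * Real.cosh (2 * t) - 1 / 2) ^ (-(3 : ℝ) / 2) with hH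
  have hane : a ≠ 0 := by linarith
  have hcosh : Real.cosh (2 * s) = (A ^ 2 + 1/2) / a := by
    rw [hA2]; field_simp; ring
  rw [hcosh]
  have ha2 : a * ((A ^ 2 + 1/2) / a) - 1/2 = A ^ 2 := by field_simp; ring
  rw [ha2]
  field_simp
  ring
end
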